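/- Let d ≥ 1, let G ∈ M_d(ℂ) be a Hermitian unitary matrix, let O ∈ M_d(ℂ) be Hermitian, and let ρ₁, ρ₂ ∈ M_d(ℂ) be density matrices. With W(θ) = exp(−iθG), O₁ = (O + G·O·G)/2, and O₂ = (O − G·O·G)/2, one has (1/(2π)) ∫₀^{2π} ( Tr[O·W(θ)·ρ₁·W(θ)†] − Tr[O·W(θ)·ρ₂·W(θ)†] )² dθ = (Tr[O₁(ρ₁−ρ₂)])² + (1/2)·(Tr[O₂(ρ₁−ρ₂)])² + (1/2)·(Tr[iO₂G(ρ₁−ρ₂)])², and in particular this expectation is at least (1/2)·(Tr[O₂(ρ₁−ρ₂)])². -/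

import Mathlib

/-!
Since `G² = 1`, the exponential series splits into its even and odd parts and
`W(θ) = cos θ - i sin θ G`. In the Heisenberg picture this gives
`W(θ)† O W(θ) = O₁ + cos 2θ O₂ - sin 2θ (i O₂ G)`, so the difference of the two expectation values
is a trigonometric polynomial `a + b cos 2θ - c sin 2θ`, whose square has mean
`a² + (b² + c²)/2` over a period.
-/

open Matrix MeasureTheory
open scoped ComplexOrder

noncomputable section

/-- The rotation `W(θ) = exp(−iθG)` generated by a matrix `G`. -/
def Wrot {d : ℕ} (G : Matrix (Fin d) (Fin d) ℂ) (θ : ℝ) : Matrix (Fin d) (Fin d) ℂ :=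
  NormedSpace.exp ((-(Complex.I * (θ : ℂ))) • G)

/-- The commuting part `O₁ = (O + G·O·G)/2` of `O` with respect to `G`. -/
def Opart1 {d : ℕ} (G O : Matrix (Fin d) (Fin d) ℂ) : Matrix (Fin d) (Fin d) ℂ :=
  (2⁻¹ : ℂ) • (O + G * O * G)

/-- The anticommuting part `O₂ = (O − G·O·G)/2` of `O` with respect to `G`. -/
def Opart2 {d : ℕ} (G O : Matrix (Fin d) (Fin d) ℂ) : Matrix (Fin d) (Fin d) ℂ :=
  (2⁻¹ : ℂ) • (O - G * O * G)

theorem NormedSpace.exp_smul_of_mul_self_eq_one {A : Type*} [Ring A] [Algebra ℂ A]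
    [TopologicalSpace A] [IsTopologicalRing A] [ContinuousSMul ℂ A] [T2Space A]
    {g : A} (hg : g * g = 1) (z : ℂ) :
    NormedSpace.exp (z • g) = Complex.cosh z • (1 : A) + Complex.sinh z • g := by
  have hg_even (n : ℕ) : g ^ (2 * n) = 1 := by rw [pow_mul, sq, hg, one_pow]
  rw [NormedSpace.exp_eq_tsum ℂ]
  refine HasSum.tsum_eq (HasSum.even_add_odd ?_ ?_)
  · convert (Complex.hasSum_cosh z).smul_const (1 : A) using 2 with n
    rw [smul_pow, hg_even, smul_smul, div_eq_inv_mul]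
  · convert (Complex.hasSum_sinh z).smul_const g using 2 with n
    rw [smul_pow, pow_succ g, hg_even, one_mul, smul_smul, div_eq_inv_mul]

section Rotation

variable {d : ℕ} {G : Matrix (Fin d) (Fin d) ℂ}

open Complex in
theorem Wrot_eq_of_mul_self_eq_one (hG : G * G = 1) (θ : ℝ) :
    Wrot G θ = (Real.cos θ : ℂ) • (1 : Matrix (Fin d) (Fin d) ℂ) - (Real.sin θ * I : ℂ) • G := by
  rw [Wrot, NormedSpace.exp_smul_of_mul_self_eq_one hG, mul_comm, cosh_neg, sinh_neg,
    cosh_mul_I, sinh_mul_I, neg_smul, ← sub_eq_add_neg, ofReal_cos, ofReal_sin]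

open Complex in
theorem conjTranspose_Wrot (hGh : G.IsHermitian) (hG : G * G = 1) (θ : ℝ) :
    (Wrot G θ)ᴴ = (Real.cos θ : ℂ) • (1 : Matrix (Fin d) (Fin d) ℂ) + (Real.sin θ * I : ℂ) • G := by
  simp [Wrot_eq_of_mul_self_eq_one hG, hGh.eq, sub_eq_add_neg, -ofReal_cos, -ofReal_sin]

theorem conjTranspose_Wrot_mul_mul_Wrot (hGh : G.IsHermitian) (hG : G * G = 1)
    (O : Matrix (Fin d) (Fin d) ℂ) (θ : ℝ) :
    (Wrot G θ)ᴴ * O * Wrot G θ = Opart1 G O + (Real.cos (2 * θ) : ℂ) • Opart2 G O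
      - (Real.sin (2 * θ) : ℂ) • (Complex.I • (Opart2 G O * G)) := by
  have hOpart2G : Opart2 G O * G = (2⁻¹ : ℂ) • (O * G - G * O) := by
    rw [Opart2, smul_mul_assoc, sub_mul, Matrix.mul_assoc _ G, hG, Matrix.mul_one]
  rw [conjTranspose_Wrot hGh hG, Wrot_eq_of_mul_self_eq_one hG, hOpart2G, Opart1, Opart2,
    Real.cos_two_mul', Real.sin_two_mul]
  push_cast
  simp only [add_mul, mul_sub, smul_mul_assoc, mul_smul_comm, Matrix.one_mul, Matrix.mul_one]
  linear_combination (norm := module)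
    (2⁻¹ : ℂ) • Complex.cos_sq_add_sin_sq (θ : ℂ) • (O + G * O * G)
      - Complex.sin θ ^ 2 • Complex.I_sq • (G * O * G)

theorem trace_mul_Wrot_mul_conjTranspose (hGh : G.IsHermitian) (hG : G * G = 1)
    (O ρ : Matrix (Fin d) (Fin d) ℂ) (θ : ℝ) :
    (O * (Wrot G θ * ρ * (Wrot G θ)ᴴ)).trace = (Opart1 G O * ρ).trace
      + (Real.cos (2 * θ) : ℂ) * (Opart2 G O * ρ).trace
      - (Real.sin (2 * θ) : ℂ) * ((Complex.I • (Opart2 G O * G)) * ρ).trace := by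
  rw [trace_mul_cycle', ← Matrix.mul_assoc, ← Matrix.mul_assoc,
    conjTranspose_Wrot_mul_mul_Wrot hGh hG]
  simp only [add_mul, sub_mul, smul_mul_assoc, trace_add, trace_sub, trace_smul, smul_eq_mul]

end Rotation

section Integral

open Real

theorem integral_cos_nat_mul_zero_two_pi {n : ℕ} (hn : n ≠ 0) :
    ∫ θ in (0 : ℝ)..2 * π, cos (n * θ) = 0 := by
  rw [intervalIntegral.integral_comp_mul_left cos (Nat.cast_ne_zero.mpr hn), integral_cos,
    mul_zero, sin_periodic.nat_mul_eq, sub_self, smul_zero]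

theorem integral_sin_nat_mul_zero_two_pi (n : ℕ) :
    ∫ θ in (0 : ℝ)..2 * π, sin (n * θ) = 0 := by
  rcases eq_or_ne n 0 with rfl | hn
  · simp
  rw [intervalIntegral.integral_comp_mul_left sin (Nat.cast_ne_zero.mpr hn), integral_sin,
    mul_zero, cos_periodic.nat_mul_eq, sub_self, smul_zero]

theorem integral_sq_add_mul_cos_sub_mul_sin (a b c : ℝ) :
    ∫ θ in (0 : ℝ)..2 * π, (a + b * cos (2 * θ) - c * sin (2 * θ)) ^ 2
      = 2 * π * a ^ 2 + π * b ^ 2 + π * c ^ 2 := by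
  have hexpand (θ : ℝ) : (a + b * cos (2 * θ) - c * sin (2 * θ)) ^ 2
      = (a ^ 2 + (b ^ 2 + c ^ 2) / 2) + 2 * a * b * cos ((2 : ℕ) * θ)
        - 2 * a * c * sin ((2 : ℕ) * θ) + (b ^ 2 - c ^ 2) / 2 * cos ((4 : ℕ) * θ)
        - b * c * sin ((4 : ℕ) * θ) := by
    have h4 : ((4 : ℕ) : ℝ) * θ = 2 * (2 * θ) := by push_cast; ring
    rw [h4, cos_two_mul (2 * θ), sin_two_mul (2 * θ), Nat.cast_ofNat]
    linear_combination c ^ 2 * sin_sq_add_cos_sq (2 * θ)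
  simp_rw [hexpand]
  rw [intervalIntegral.integral_sub, intervalIntegral.integral_add, intervalIntegral.integral_sub,
    intervalIntegral.integral_add]
  · simp only [intervalIntegral.integral_const, intervalIntegral.integral_const_mul,
      integral_cos_nat_mul_zero_two_pi two_ne_zero, integral_cos_nat_mul_zero_two_pi four_ne_zero,
      integral_sin_nat_mul_zero_two_pi, smul_eq_mul]
    ring
  all_goals exact Continuous.intervalIntegrable (by fun_prop) _ _

end Integral

theorem expectation_difference_sq_general
    (d : ℕ)
    (G O : Matrix (Fin d) (Fin d) ℂ)
    (hGherm : G.IsHermitian) (hGunit : G * G = 1)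
    (ρ₁ ρ₂ : Matrix (Fin d) (Fin d) ℂ) :
    (1 / (2 * Real.pi)) * (∫ θ in (0:ℝ)..(2 * Real.pi),
        (((O * (Wrot G θ * ρ₁ * (Wrot G θ)ᴴ)).trace.re)
          - ((O * (Wrot G θ * ρ₂ * (Wrot G θ)ᴴ)).trace.re)) ^ 2)
      = ((Opart1 G O * (ρ₁ - ρ₂)).trace.re) ^ 2
        + (1 / 2) * ((Opart2 G O * (ρ₁ - ρ₂)).trace.re) ^ 2
        + (1 / 2) * (((Complex.I • (Opart2 G O * G)) * (ρ₁ - ρ₂)).trace.re) ^ 2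
    ∧ (1 / (2 * Real.pi)) * (∫ θ in (0:ℝ)..(2 * Real.pi),
        (((O * (Wrot G θ * ρ₁ * (Wrot G θ)ᴴ)).trace.re)
          - ((O * (Wrot G θ * ρ₂ * (Wrot G θ)ᴴ)).trace.re)) ^ 2)
      ≥ (1 / 2) * ((Opart2 G O * (ρ₁ - ρ₂)).trace.re) ^ 2 := by
  set a := (Opart1 G O * (ρ₁ - ρ₂)).trace.re
  set b := (Opart2 G O * (ρ₁ - ρ₂)).trace.re
  set c := ((Complex.I • (Opart2 G O * G)) * (ρ₁ - ρ₂)).trace.re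
  have hintegrand (θ : ℝ) :
      (O * (Wrot G θ * ρ₁ * (Wrot G θ)ᴴ)).trace.re - (O * (Wrot G θ * ρ₂ * (Wrot G θ)ᴴ)).trace.re
        = a + b * Real.cos (2 * θ) - c * Real.sin (2 * θ) := by
    rw [← Complex.sub_re, ← trace_sub, ← Matrix.mul_sub, ← Matrix.sub_mul, ← Matrix.mul_sub,
      trace_mul_Wrot_mul_conjTranspose hGherm hGunit]
    simp only [Complex.add_re, Complex.sub_re, Complex.re_ofReal_mul]
    ring
  have hmean : 1 / (2 * Real.pi) * (2 * Real.pi * a ^ 2 + Real.pi * b ^ 2 + Real.pi * c ^ 2)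
      = a ^ 2 + 1 / 2 * b ^ 2 + 1 / 2 * c ^ 2 := by
    field_simp
  simp_rw [hintegrand, integral_sq_add_mul_cos_sub_mul_sin, hmean, true_and]
  linarith [sq_nonneg a, sq_nonneg c]

/-- For a Hermitian unitary `G`, a Hermitian observable `O` and density matrices
`ρ₁, ρ₂`, with `W(θ) = exp(−iθG)`, `O₁ = (O + GOG)/2` and `O₂ = (O − GOG)/2`:
`E_θ (Tr[O W ρ₁ W†] − Tr[O W ρ₂ W†])²
  = Tr[O₁(ρ₁−ρ₂)]² + ½ Tr[O₂(ρ₁−ρ₂)]² + ½ Tr[iO₂G(ρ₁−ρ₂)]² ≥ ½ Tr[O₂(ρ₁−ρ₂)]²`,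
with `θ` uniform on `[0, 2π]`. -/
theorem expectation_difference_sq
    (d : ℕ) (hd : 1 ≤ d)
    (G O : Matrix (Fin d) (Fin d) ℂ)
    (hGherm : G.IsHermitian) (hGunit : G * G = 1) (hO : O.IsHermitian)
    (ρ₁ ρ₂ : Matrix (Fin d) (Fin d) ℂ)
    (hρ₁ : ρ₁.PosSemidef) (hρ₁tr : ρ₁.trace = 1)
    (hρ₂ : ρ₂.PosSemidef) (hρ₂tr : ρ₂.trace = 1) :
    (1 / (2 * Real.pi)) * (∫ θ in (0:ℝ)..(2 * Real.pi),
        (((O * (Wrot G θ * ρ₁ * (Wrot G θ)ᴴ)).trace.re)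
          - ((O * (Wrot G θ * ρ₂ * (Wrot G θ)ᴴ)).trace.re)) ^ 2)
      = ((Opart1 G O * (ρ₁ - ρ₂)).trace.re) ^ 2
        + (1 / 2) * ((Opart2 G O * (ρ₁ - ρ₂)).trace.re) ^ 2
        + (1 / 2) * (((Complex.I • (Opart2 G O * G)) * (ρ₁ - ρ₂)).trace.re) ^ 2
    ∧ (1 / (2 * Real.pi)) * (∫ θ in (0:ℝ)..(2 * Real.pi),
        (((O * (Wrot G θ * ρ₁ * (Wrot G θ)ᴴ)).trace.re)
          - ((O * (Wrot G θ * ρ₂ * (Wrot G θ)ᴴ)).trace.re)) ^ 2)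
      ≥ (1 / 2) * ((Opart2 G O * (ρ₁ - ρ₂)).trace.re) ^ 2 :=
  expectation_difference_sq_general d G O hGherm hGunit ρ₁ ρ₂
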